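/- arXiv:1908.04708 — 2 statements merged into one kernel-verified Lean document; each statement's English description precedes it below -/
import Mathlib

section
/- Let L(n) = Σ_{d | n} c(d) be the total number of 1-cycles. Then L(n)/(n−2)! tends to 1 as n tends to infinity. -/
open Equiv Filter Topology

/-- The cyclic permutation `σ : i ↦ i + 1` of `ZMod n`. -/
def cyc (n : ℕ) : Equiv.Perm (ZMod n) := Equiv.addRight (1 : ZMod n)

/-- The equivalence relation `R₂`: `π R₂ π'` iff `π' = σ^i ∘ π` for some integer `i`. -/
def incSetoid (n : ℕ) : Setoid (Equiv.Perm (ZMod n)) where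
  r π π' := ∃ i : ℤ, π' = cyc n ^ i * π
  iseqv := by
    constructor
    · exact fun π => ⟨0, by simp⟩
    · rintro π π' ⟨i, rfl⟩
      exact ⟨-i, by rw [← mul_assoc, ← zpow_add]; simp⟩
    · rintro a b c ⟨i, rfl⟩ ⟨j, rfl⟩
      exact ⟨j + i, by rw [← mul_assoc, ← zpow_add]⟩

/-- The set of `R₂`-equivalence classes. -/
def IncClasses (n : ℕ) := Quotient (incSetoid n)

/-- The well-defined map `inc(π) ↦ inc(π ∘ σ)` on `R₂`-classes. -/
def incShift (n : ℕ) : IncClasses n → IncClasses n :=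
  Quot.map (fun π => π * cyc n)
    (by rintro π π' ⟨i, rfl⟩; exact ⟨i, mul_assoc _ _ _⟩)

/-- The 1-cycle (orbit under `inc(ρ) ↦ inc(ρ∘σ)`) of a class `q`. -/
def oneCycle (n : ℕ) (q : IncClasses n) : Set (IncClasses n) :=
  Set.range fun i : ℕ => (incShift n)^[i] q

/-- `c(d)`: the number of 1-cycles of cardinality `d`. -/
noncomputable def numCycles (n d : ℕ) : ℕ :=
  Set.ncard {S : Set (IncClasses n) | (∃ q, S = oneCycle n q) ∧ S.ncard = d}

section helpers
variable {n : ℕ}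

lemma cyc_zpow (i : ℤ) : (cyc n)^i = Equiv.addRight (i : ZMod n) := by
  rw [cyc, Equiv.zsmul_addRight, zsmul_one]

lemma cyc_pow (k : ℕ) : (cyc n)^k = Equiv.addRight (k : ZMod n) := by
  rw [cyc, Equiv.nsmul_addRight, nsmul_eq_mul, mul_one]

lemma cyc_pow_n : (cyc n)^n = 1 := by
  rw [cyc_pow, ZMod.natCast_self, Equiv.addRight_zero]

lemma eqv_iff (π π' : Equiv.Perm (ZMod n)) :
    (⟦π⟧ : IncClasses n) = ⟦π'⟧ ↔ ∃ a : ZMod n, π' = Equiv.addRight a * π := by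
  rw [Quotient.eq]
  constructor
  · rintro ⟨i, rfl⟩; exact ⟨(i : ZMod n), by rw [cyc_zpow]⟩
  · rintro ⟨a, rfl⟩
    obtain ⟨i, rfl⟩ := ZMod.intCast_surjective a
    exact ⟨i, by rw [cyc_zpow]⟩

lemma incShift_mk (π : Equiv.Perm (ZMod n)) :
    incShift n (⟦π⟧ : IncClasses n) = ⟦π * cyc n⟧ := rfl

lemma incShift_iterate (k : ℕ) (π : Equiv.Perm (ZMod n)) :
    (incShift n)^[k] (⟦π⟧ : IncClasses n) = ⟦π * (cyc n)^k⟧ := by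
  induction k with
  | zero => simp; rfl
  | succ k ih =>
    rw [Function.iterate_succ_apply' (f := incShift n) (n := k) (x := (⟦π⟧ : IncClasses n)), ih, incShift_mk, pow_succ, mul_assoc]

lemma incShift_iterate_n (q : IncClasses n) : (incShift n)^[n] q = q := by
  induction q using Quotient.ind with
  | _ π => rw [incShift_iterate, cyc_pow_n, mul_one]

end helpers

section cardsec
variable {n : ℕ}

lemma addRight_mul_apply (a : ZMod n) (π : Equiv.Perm (ZMod n)) (x : ZMod n) :
    (Equiv.addRight a * π) x = π x + a := rfl

lemma bij_F (hn : 0 < n) :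
    Function.Bijective (fun π : Equiv.Perm (ZMod n) => ((⟦π⟧ : IncClasses n), π 0)) := by
  constructor
  · intro π π' h
    simp only [Prod.mk.injEq] at h
    obtain ⟨h1, h2⟩ := h
    rw [eqv_iff] at h1
    obtain ⟨a, rfl⟩ := h1
    rw [addRight_mul_apply] at h2
    have ha : a = 0 := by
      have := left_eq_add.mp h2
      exact this
    rw [ha, Equiv.addRight_zero, one_mul]
  · rintro ⟨q, y⟩
    induction q using Quotient.ind with
    | _ π =>
      refine ⟨Equiv.addRight (y - π 0) * π, ?_⟩
      simp only [Prod.mk.injEq]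
      refine ⟨(eqv_iff _ _).mpr ⟨π 0 - y, Equiv.ext fun x => by simp only [addRight_mul_apply]; ring⟩, ?_⟩
      rw [addRight_mul_apply]; ring

lemma card_incClasses (hn : 0 < n) : Nat.card (IncClasses n) * n = n.factorial := by
  haveI : NeZero n := ⟨hn.ne'⟩
  have h := Nat.card_eq_of_bijective _ (bij_F hn)
  rw [Nat.card_prod, Nat.card_zmod] at h
  show Nat.card (Quotient (incSetoid n)) * n = n.factorial
  rw [← h, Nat.card_eq_fintype_card, Fintype.card_perm, ZMod.card]

end cardsec

open scoped Classical

section orbits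
variable {n : ℕ}

lemma isPeriodic (q : IncClasses n) : Function.IsPeriodicPt (incShift n) n q :=
  incShift_iterate_n q

lemma incShift_iterate_n_fun : (incShift n)^[n] = id := funext incShift_iterate_n

lemma m_pos (hn : 0 < n) (q : IncClasses n) :
    0 < Function.minimalPeriod (incShift n) q :=
  (isPeriodic q).minimalPeriod_pos hn

lemma m_dvd (q : IncClasses n) : Function.minimalPeriod (incShift n) q ∣ n :=
  (isPeriodic q).minimalPeriod_dvd

lemma oneCycle_eq (hn : 0 < n) (q : IncClasses n) :
    oneCycle n q = ↑((Finset.range (Function.minimalPeriod (incShift n) q)).image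
      fun i => (incShift n)^[i] q) := by
  ext x
  simp only [oneCycle, Set.mem_range, Finset.coe_image, Set.mem_image, Finset.mem_coe,
    Finset.mem_range]
  constructor
  · rintro ⟨i, rfl⟩
    exact ⟨i % _, Nat.mod_lt _ (m_pos hn q), Function.iterate_mod_minimalPeriod_eq⟩
  · rintro ⟨i, _, rfl⟩
    exact ⟨i, rfl⟩

lemma ncard_oneCycle (hn : 0 < n) (q : IncClasses n) :
    (oneCycle n q).ncard = Function.minimalPeriod (incShift n) q := by
  rw [oneCycle_eq hn q, Set.ncard_coe_finset, Finset.card_image_of_injOn, Finset.card_range]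
  rw [Finset.coe_range]
  exact Function.iterate_injOn_Iio_minimalPeriod

lemma mem_oneCycle_self (q : IncClasses n) : q ∈ oneCycle n q := ⟨0, rfl⟩

lemma oneCycle_subset_of_mem {q r : IncClasses n} (h : r ∈ oneCycle n q) :
    oneCycle n r ⊆ oneCycle n q := by
  obtain ⟨i, rfl⟩ := h
  rintro x ⟨j, rfl⟩
  refine ⟨j + i, ?_⟩
  show (incShift n)^[j + i] q = (incShift n)^[j] ((incShift n)^[i] q)
  rw [Function.iterate_add_apply]

lemma mem_oneCycle_symm (hn : 0 < n) {q r : IncClasses n} (h : r ∈ oneCycle n q) :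
    q ∈ oneCycle n r := by
  obtain ⟨i, rfl⟩ := h
  refine ⟨n * i - i, ?_⟩
  show (incShift n)^[n * i - i] ((incShift n)^[i] q) = q
  rw [← Function.iterate_add_apply]
  have hle : i ≤ n * i := Nat.le_mul_of_pos_left i hn
  rw [Nat.sub_add_cancel hle, Function.iterate_mul, incShift_iterate_n_fun]
  simp

lemma oneCycle_eq_of_mem (hn : 0 < n) {q r : IncClasses n} (h : r ∈ oneCycle n q) :
    oneCycle n r = oneCycle n q :=
  le_antisymm (oneCycle_subset_of_mem h)
    (oneCycle_subset_of_mem (mem_oneCycle_symm hn h))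

lemma fiber_eq (hn : 0 < n) (q : IncClasses n) :
    {q' | oneCycle n q' = oneCycle n q} = oneCycle n q := by
  ext q'
  constructor
  · intro h
    exact h ▸ mem_oneCycle_self q'
  · intro h
    exact oneCycle_eq_of_mem hn h

end orbits

section fixcount
variable {n : ℕ}

lemma fix_step {d : ℕ} {π : Equiv.Perm (ZMod n)} {a : ZMod n}
    (h : π * (cyc n)^d = Equiv.addRight a * π) (x : ZMod n) :
    π (x + (d : ZMod n)) = π x + a := by
  have := DFunLike.congr_fun h x
  rwa [Equiv.Perm.mul_apply, cyc_pow, Equiv.coe_addRight, addRight_mul_apply] at this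

lemma fix_iter {d : ℕ} {π : Equiv.Perm (ZMod n)} {a : ZMod n}
    (h : π * (cyc n)^d = Equiv.addRight a * π) (k : ℕ) (x : ZMod n) :
    π (x + ((k * d : ℕ) : ZMod n)) = π x + k • a := by
  induction k with
  | zero => simp
  | succ k ih =>
    have : ((((k+1) * d : ℕ)) : ZMod n) = ((k * d : ℕ) : ZMod n) + (d : ZMod n) := by
      push_cast; ring
    rw [this, ← add_assoc, fix_step h, ih, succ_nsmul, add_assoc]

lemma fixP_ncard (hn : 0 < n) (d : ℕ) (hd : 0 < d) :
    {π : Equiv.Perm (ZMod n) | ∃ a : ZMod n, π * (cyc n)^d = Equiv.addRight a * π}.ncard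
      ≤ n ^ d * n := by
  haveI : NeZero n := ⟨hn.ne'⟩
  have key : Set.InjOn (fun π : Equiv.Perm (ZMod n) =>
      ((fun j : Fin d => π ((j : ℕ) : ZMod n)), π ((d : ℕ) : ZMod n) - π 0))
      {π | ∃ a : ZMod n, π * (cyc n)^d = Equiv.addRight a * π} := by
    rintro π ⟨a, ha⟩ π' ⟨a', ha'⟩ hdata
    simp only [Prod.mk.injEq] at hdata
    obtain ⟨hfun, hsub⟩ := hdata
    -- identify a and a'
    have haa : a = a' := by
      have h1 : π ((d:ℕ) : ZMod n) = π 0 + a := by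
        have := fix_step ha 0; rwa [zero_add] at this
      have h2 : π' ((d:ℕ) : ZMod n) = π' 0 + a' := by
        have := fix_step ha' 0; rwa [zero_add] at this
      have h0 : π 0 = π' 0 := by
        have := congrFun hfun ⟨0, hd⟩
        simpa using this
      rw [h1, h2, h0] at hsub
      simpa using hsub
    ext x
    have hx : x = (((x.val % d : ℕ)) : ZMod n) + (((x.val / d * d : ℕ)) : ZMod n) := by
      rw [← Nat.cast_add, Nat.mod_add_div']
      exact (ZMod.natCast_rightInverse x).symm
    have hr : x.val % d < d := Nat.mod_lt _ hd
    have hv : π (((x.val % d : ℕ)) : ZMod n) = π' (((x.val % d : ℕ)) : ZMod n) := by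
      have := congrFun hfun ⟨x.val % d, hr⟩
      simpa using this
    calc π x = π ((((x.val % d : ℕ)) : ZMod n) + (((x.val / d * d : ℕ)) : ZMod n)) := by rw [← hx]
    _ = π (((x.val % d : ℕ)) : ZMod n) + (x.val / d) • a := fix_iter ha _ _
    _ = π' (((x.val % d : ℕ)) : ZMod n) + (x.val / d) • a' := by rw [hv, haa]
    _ = π' ((((x.val % d : ℕ)) : ZMod n) + (((x.val / d * d : ℕ)) : ZMod n)) :=
        (fix_iter ha' _ _).symm
    _ = π' x := by rw [← hx]
  calc {π : Equiv.Perm (ZMod n) | ∃ a : ZMod n, π * (cyc n)^d = Equiv.addRight a * π}.ncard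
      ≤ (Set.univ : Set ((Fin d → ZMod n) × ZMod n)).ncard :=
        Set.ncard_le_ncard_of_injOn _ (fun _ _ => Set.mem_univ _) key (Set.toFinite _)
    _ = n ^ d * n := by
        rw [Set.ncard_univ, Nat.card_eq_fintype_card]
        simp [ZMod.card]

end fixcount

section classfix
variable {n : ℕ}

lemma ncard_setOf_eq_card_filter {α : Type*} [Fintype α] (p : α → Prop) [DecidablePred p] :
    {x | p x}.ncard = (Finset.univ.filter p).card := by
  rw [← Set.ncard_coe_finset]
  congr 1
  ext x
  simp

lemma fixQ_ncard (hn : 0 < n) (d : ℕ) (hd : 0 < d) :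
    {q : IncClasses n | (incShift n)^[d] q = q}.ncard ≤ n ^ d * n := by
  haveI : NeZero n := ⟨hn.ne'⟩
  haveI : Finite (IncClasses n) := Quotient.finite _
  have hsub : {q : IncClasses n | (incShift n)^[d] q = q} ⊆
      (fun π => (⟦π⟧ : IncClasses n)) ''
        {π : Equiv.Perm (ZMod n) | ∃ a : ZMod n, π * (cyc n)^d = Equiv.addRight a * π} := by
    intro q hq
    induction q using Quotient.ind with
    | _ π =>
      refine ⟨π, ?_, rfl⟩
      have hq' : (⟦π * (cyc n)^d⟧ : IncClasses n) = ⟦π⟧ := by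
        rw [← incShift_iterate]; exact hq
      exact (eqv_iff π (π * (cyc n)^d)).mp hq'.symm
  calc {q : IncClasses n | (incShift n)^[d] q = q}.ncard
      ≤ ((fun π => (⟦π⟧ : IncClasses n)) ''
          {π : Equiv.Perm (ZMod n) | ∃ a : ZMod n, π * (cyc n)^d = Equiv.addRight a * π}).ncard :=
        Set.ncard_le_ncard hsub (Set.toFinite _)
    _ ≤ {π : Equiv.Perm (ZMod n) | ∃ a : ZMod n, π * (cyc n)^d = Equiv.addRight a * π}.ncard :=
        Set.ncard_image_le (Set.toFinite _)
    _ ≤ n ^ d * n := fixP_ncard hn d hd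

lemma card_incClasses' (hn : 0 < n) : Nat.card (IncClasses n) = (n-1).factorial := by
  have h := card_incClasses hn
  have h2 : n.factorial = (n-1).factorial * n := by
    cases n with
    | zero => omega
    | succ m => simp [Nat.factorial_succ, mul_comm]
  exact Nat.eq_of_mul_eq_mul_right hn (h.trans h2)

end classfix

section maincount
variable {n : ℕ}

lemma proper_div_le_half (hn : 0 < n) {d : ℕ} (hd : d ∈ n.properDivisors) : d ≤ n / 2 := by
  obtain ⟨hdvd, hlt⟩ := Nat.mem_properDivisors.mp hd
  obtain ⟨k, hk⟩ := hdvd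
  have hk2 : 2 ≤ k := by
    rcases Nat.lt_or_ge k 2 with h | h
    · interval_cases k <;> omega
    · exact h
  rw [Nat.le_div_iff_mul_le (by norm_num)]
  calc d * 2 ≤ d * k := Nat.mul_le_mul_left d hk2
  _ = n := hk.symm

lemma main_bounds (hn : 2 ≤ n) :
    (n-1) * (n-2).factorial ≤ n * (∑ d ∈ n.divisors, numCycles n d) + n * (n ^ (n/2 + 2)) ∧
    n * (∑ d ∈ n.divisors, numCycles n d) ≤ (n+1) * (n-2).factorial
      + n * (n ^ (n/2 + 2)) := by
  have hn0 : 0 < n := by omega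
  haveI : NeZero n := ⟨hn0.ne'⟩
  haveI : Finite (IncClasses n) := Quotient.finite _
  haveI := Fintype.ofFinite (IncClasses n)
  classical
  set f := incShift n with hf
  set g : IncClasses n → Set (IncClasses n) := oneCycle n with hg
  set T' : Finset (Set (IncClasses n)) := Finset.univ.image g with hT'
  set E : ℕ := n ^ (n/2 + 2) with hE
  -- basic facts about members of T'
  have hmemT : ∀ S ∈ T', ∃ q, S = g q := by
    intro S hS
    obtain ⟨q, _, rfl⟩ := Finset.mem_image.mp hS
    exact ⟨q, rfl⟩
  have hncardT : ∀ q : IncClasses n, (g q).ncard = Function.minimalPeriod f q :=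
    fun q => ncard_oneCycle hn0 q
  have hdvdT : ∀ S ∈ T', S.ncard ∣ n := by
    intro S hS
    obtain ⟨q, rfl⟩ := hmemT S hS
    rw [hncardT q]
    exact m_dvd q
  have hleT : ∀ S ∈ T', S.ncard ≤ n := fun S hS => Nat.le_of_dvd hn0 (hdvdT S hS)
  -- fiber cardinalities
  have hfiber : ∀ S ∈ T', (Finset.univ.filter (fun q => g q = S)).card = S.ncard := by
    intro S hS
    obtain ⟨q₀, rfl⟩ := hmemT S hS
    rw [← ncard_setOf_eq_card_filter]
    congr 1
    exact fiber_eq hn0 q₀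
  -- total count
  have hsum : (Finset.univ : Finset (IncClasses n)).card
      = ∑ S ∈ T', (Finset.univ.filter (fun q => g q = S)).card :=
    Finset.card_eq_sum_card_fiberwise (fun q _ => Finset.mem_image_of_mem g (Finset.mem_univ q))
  have htot : ∑ S ∈ T', S.ncard = (n-1).factorial := by
    rw [← Finset.sum_congr rfl hfiber, ← hsum, Finset.card_univ, ← Nat.card_eq_fintype_card]
    exact card_incClasses' hn0
  -- the sum in the statement is T'.card
  have hnum : ∀ d : ℕ, numCycles n d = (T'.filter (fun S => S.ncard = d)).card := by
    intro d
    rw [numCycles, ← Set.ncard_coe_finset]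
    congr 1
    ext S
    simp only [Finset.coe_filter, Set.mem_setOf_eq, hT', Finset.mem_image, Finset.mem_univ,
      true_and]
    constructor
    · rintro ⟨⟨q, rfl⟩, h2⟩; exact ⟨⟨q, rfl⟩, h2⟩
    · rintro ⟨⟨q, rfl⟩, h2⟩; exact ⟨⟨q, rfl⟩, h2⟩
  have hLsum : ∑ d ∈ n.divisors, numCycles n d = T'.card := by
    rw [Finset.sum_congr rfl (fun d _ => hnum d)]
    refine (Finset.card_eq_sum_card_fiberwise ?_).symm
    intro S hS
    exact Nat.mem_divisors.mpr ⟨hdvdT S hS, hn0.ne'⟩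
  set L := T'.card with hL
  -- split into big and small
  set Big := T'.filter (fun S => S.ncard = n) with hBig
  set Small := T'.filter (fun S => S.ncard ≠ n) with hSmall
  have hsplit : L = Big.card + Small.card := (Finset.card_filter_add_card_filter_not
    (s := T') (p := fun S => S.ncard = n)).symm
  -- bound on small classes
  set SmQ := Finset.univ.filter
    (fun q : IncClasses n => ∃ d ∈ n.properDivisors, f^[d] q = q) with hSmQ
  have hSmallCard : Small.card ≤ SmQ.card := by
    haveI : Nonempty (IncClasses n) := ⟨⟦1⟧⟩
    set φ : Set (IncClasses n) → IncClasses n :=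
      fun S => if h : ∃ q, S = g q then h.choose else Classical.arbitrary _ with hφ
    have hφS : ∀ S ∈ T', S = g (φ S) := by
      intro S hS
      have h := hmemT S hS
      simp only [hφ, dif_pos h]
      exact h.choose_spec
    refine Finset.card_le_card_of_injOn φ ?_ ?_
    · intro S hS
      have hST : S ∈ T' := (Finset.mem_filter.mp hS).1
      have hSne : S.ncard ≠ n := (Finset.mem_filter.mp hS).2
      set q₀ := φ S with hq₀
      have hSg : S = g q₀ := hφS S hST
      set d := Function.minimalPeriod f q₀ with hd
      have hdn : S.ncard = d := by rw [hSg, hncardT]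
      refine Finset.mem_filter.mpr ⟨Finset.mem_univ _, d, ?_, ?_⟩
      · refine Nat.mem_properDivisors.mpr ⟨m_dvd q₀, ?_⟩
        exact lt_of_le_of_ne (Nat.le_of_dvd hn0 (m_dvd q₀)) (hdn ▸ hSne)
      · exact Function.isPeriodicPt_minimalPeriod f q₀
    · intro S hS S' hS' hSS
      rw [hφS S (Finset.mem_filter.mp (Finset.mem_coe.mp hS)).1,
        hφS S' (Finset.mem_filter.mp (Finset.mem_coe.mp hS')).1, hSS]
  have hSmQcard : SmQ.card ≤ E := by
    have hsub : SmQ ⊆ n.properDivisors.biUnion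
        (fun d => Finset.univ.filter (fun q => f^[d] q = q)) := by
      intro q hq
      obtain ⟨-, d, hd, hfix⟩ := Finset.mem_filter.mp hq
      exact Finset.mem_biUnion.mpr ⟨d, hd, Finset.mem_filter.mpr ⟨Finset.mem_univ _, hfix⟩⟩
    calc SmQ.card ≤ _ := Finset.card_le_card hsub
      _ ≤ ∑ d ∈ n.properDivisors, (Finset.univ.filter (fun q => f^[d] q = q)).card :=
          Finset.card_biUnion_le
      _ ≤ ∑ _d ∈ n.properDivisors, n ^ (n/2 + 1) := by
          refine Finset.sum_le_sum ?_
          intro d hd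
          have hd0 : 0 < d := Nat.pos_of_dvd_of_pos (Nat.mem_properDivisors.mp hd).1 hn0
          calc (Finset.univ.filter (fun q => f^[d] q = q)).card
              = {q : IncClasses n | f^[d] q = q}.ncard :=
                (ncard_setOf_eq_card_filter _).symm
            _ ≤ n ^ d * n := fixQ_ncard hn0 d hd0
            _ = n ^ (d + 1) := by ring
            _ ≤ n ^ (n/2 + 1) := Nat.pow_le_pow_right hn0 (by
                have := proper_div_le_half hn0 hd; omega)
      _ = n.properDivisors.card * n ^ (n/2 + 1) := by
          rw [Finset.sum_const, smul_eq_mul]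
      _ ≤ n * n ^ (n/2 + 1) := by
          refine Nat.mul_le_mul_right _ ?_
          calc n.properDivisors.card ≤ (Finset.range n).card := by
                refine Finset.card_le_card ?_
                intro d hd
                exact Finset.mem_range.mpr (Nat.mem_properDivisors.mp hd).2
            _ = n := Finset.card_range n
      _ = E := by rw [hE, pow_succ, pow_succ]; ring
  have hsmallE : Small.card ≤ E := hSmallCard.trans hSmQcard
  -- sum over T' of ncard splits
  have hsumsplit : ∑ S ∈ T', S.ncard = n * Big.card + ∑ S ∈ Small, S.ncard := by
    rw [← Finset.sum_filter_add_sum_filter_not T' (fun S => S.ncard = n), ← hBig, ← hSmall]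
    congr 1
    rw [Finset.sum_congr rfl (fun S hS => (Finset.mem_filter.mp hS).2), Finset.sum_const,
      smul_eq_mul, mul_comm]
  have hfact : (n-1).factorial = (n-1) * (n-2).factorial := by
    have : n - 1 = (n - 2) + 1 := by omega
    rw [this, Nat.factorial_succ]
  -- big bound
  have hBign : n * Big.card ≤ (n-1).factorial := by
    rw [← htot, hsumsplit]; omega
  have hBigle : Big.card ≤ (n-2).factorial := by
    have h1 : n * Big.card ≤ n * (n-2).factorial := by
      calc n * Big.card ≤ (n-1).factorial := hBign
        _ = (n-1) * (n-2).factorial := hfact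
        _ ≤ n * (n-2).factorial := Nat.mul_le_mul_right _ (by omega)
    exact Nat.le_of_mul_le_mul_left h1 hn0
  -- small orbit total
  have hsmallsum : ∑ S ∈ Small, S.ncard ≤ n * E := by
    calc ∑ S ∈ Small, S.ncard ≤ ∑ _S ∈ Small, n :=
          Finset.sum_le_sum (fun S hS => hleT S (Finset.mem_filter.mp hS).1)
      _ = Small.card * n := by rw [Finset.sum_const, smul_eq_mul]
      _ ≤ E * n := Nat.mul_le_mul_right _ hsmallE
      _ = n * E := mul_comm _ _
  constructor
  · -- lower bound
    rw [hLsum]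
    have h1 : (n-1).factorial ≤ n * Big.card + n * E := by
      rw [← htot, hsumsplit]; omega
    rw [← hfact]
    calc (n-1).factorial ≤ n * Big.card + n * E := h1
      _ ≤ n * L + n * E := by
          have : Big.card ≤ L := by omega
          exact Nat.add_le_add_right (Nat.mul_le_mul_left n this) _
  · -- upper bound
    rw [hLsum]
    calc n * L = n * Big.card + n * Small.card := by rw [hsplit]; ring
      _ ≤ n * (n-2).factorial + n * E := by
          refine Nat.add_le_add (Nat.mul_le_mul_left n hBigle) (Nat.mul_le_mul_left n hsmallE)
      _ ≤ (n+1) * (n-2).factorial + n * E := by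
          refine Nat.add_le_add_right (Nat.mul_le_mul_right _ (by omega)) _
end maincount

section asympt

lemma pow_succ_le_eight_mul {n m : ℕ} (hn : 6 ≤ n) (hm : m ≤ 2 * n) :
    (n+1)^m ≤ 8 * n^m := by
  have hn0 : (0:ℝ) < n := by positivity
  have key : ((n:ℝ)+1)^m ≤ 8 * (n:ℝ)^m := by
    have h1 : ((n:ℝ)+1) = (n:ℝ) * (1 + 1/n) := by field_simp
    have h2 : (1 + 1/(n:ℝ)) ≤ Real.exp (1/n) := by
      have := Real.add_one_le_exp (1/(n:ℝ))
      linarith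
    have h3 : (1 + 1/(n:ℝ))^m ≤ Real.exp (1/n) ^ m := by
      apply pow_le_pow_left₀ (by positivity) h2
    have h4 : Real.exp (1/(n:ℝ)) ^ m = Real.exp (m / n) := by
      rw [← Real.exp_nat_mul]
      congr 1
      field_simp
    have h5 : Real.exp ((m:ℝ) / n) ≤ Real.exp 2 := by
      apply Real.exp_le_exp.mpr
      rw [div_le_iff₀ hn0]
      norm_num
      calc (m:ℝ) ≤ 2 * n := by exact_mod_cast hm
        _ = 2 * n := rfl
    have h6 : Real.exp 2 ≤ 8 := by
      have h := Real.exp_one_lt_d9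
      calc Real.exp 2 = Real.exp 1 ^ 2 := by
            rw [← Real.exp_nat_mul]; norm_num
        _ ≤ 2.7182818286 ^ 2 := by
            apply pow_le_pow_left₀ (Real.exp_pos 1).le h.le
        _ ≤ 8 := by norm_num
    calc ((n:ℝ)+1)^m = (n:ℝ)^m * (1 + 1/n)^m := by
          rw [h1, mul_pow]
      _ ≤ (n:ℝ)^m * Real.exp 2 := by
          refine mul_le_mul_of_nonneg_left ?_ (by positivity)
          exact h3.trans (h4 ▸ h5)
      _ ≤ (n:ℝ)^m * 8 := by
          refine mul_le_mul_of_nonneg_left h6 (by positivity)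
      _ = 8 * (n:ℝ)^m := by ring
  have := key
  exact_mod_cast (by push_cast; exact this : ((n:ℕ)+1:ℝ)^m ≤ ((8 * n^m : ℕ) : ℝ))

lemma pow_le_factorial_sq {n : ℕ} (hn : 24 ≤ n) : n^(n+6) ≤ ((n-2).factorial)^2 := by
  induction n, hn using Nat.le_induction with
  | base => norm_num [Nat.factorial]
  | succ n hn ih =>
    have hstep : (n+1)^(n+6) ≤ 8 * n^(n+6) := pow_succ_le_eight_mul (by omega) (by omega)
    have hfac : (n+1-2).factorial = (n-1) * (n-2).factorial := by
      have h : n+1-2 = (n-2)+1 := by omega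
      rw [h, Nat.factorial_succ]
      congr 1
      omega
    calc (n+1)^(n+1+6) = (n+1)^(n+6) * (n+1) := by
          rw [← pow_succ]
      _ ≤ (8 * n^(n+6)) * (n+1) := Nat.mul_le_mul_right _ hstep
      _ = (8 * (n+1)) * n^(n+6) := by ring
      _ ≤ (n-1)^2 * n^(n+6) := by
          refine Nat.mul_le_mul_right _ ?_
          have : 24 ≤ n := hn
          nlinarith [Nat.sub_add_cancel (show 1 ≤ n by omega)]
      _ ≤ (n-1)^2 * ((n-2).factorial)^2 := Nat.mul_le_mul_left _ ih
      _ = ((n-1) * (n-2).factorial)^2 := by ring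
      _ = ((n+1-2).factorial)^2 := by rw [hfac]

lemma E_le_factorial {n : ℕ} (hn : 24 ≤ n) : n * n^(n/2+2) ≤ (n-2).factorial := by
  have hsq : (n * n^(n/2+2))^2 ≤ ((n-2).factorial)^2 := by
    calc (n * n^(n/2+2))^2 = n^(2*(n/2) + 6) := by ring_nf
      _ ≤ n^(n+6) := Nat.pow_le_pow_right (by omega) (by omega)
      _ ≤ ((n-2).factorial)^2 := pow_le_factorial_sq hn
  exact (Nat.pow_le_pow_iff_left (by norm_num)).mp hsq
end asympt

/-- `L(n) = Σ_{d ∣ n} c(d)`, the total number of 1-cycles, satisfies `L(n)/(n−2)! → 1`. -/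
theorem stmt5 :
    Tendsto (fun n : ℕ => ((∑ d ∈ n.divisors, numCycles n d : ℕ) : ℝ) / ((n - 2).factorial : ℝ))
      atTop (𝓝 1) := by
  have hlo : Tendsto (fun n : ℕ => ((n:ℝ) - 2) / n) atTop (𝓝 1) := by
    have h1 : Tendsto (fun n : ℕ => 1 - 2 / (n:ℝ)) atTop (𝓝 (1 - 0)) :=
      tendsto_const_nhds.sub (tendsto_const_div_atTop_nhds_zero_nat 2)
    rw [sub_zero] at h1
    refine h1.congr' ?_
    filter_upwards [eventually_gt_atTop 0] with n hn
    have : (n:ℝ) ≠ 0 := Nat.cast_ne_zero.mpr hn.ne'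
    field_simp
  have hhi : Tendsto (fun n : ℕ => ((n:ℝ) + 2) / n) atTop (𝓝 1) := by
    have h1 : Tendsto (fun n : ℕ => 1 + 2 / (n:ℝ)) atTop (𝓝 (1 + 0)) :=
      tendsto_const_nhds.add (tendsto_const_div_atTop_nhds_zero_nat 2)
    rw [add_zero] at h1
    refine h1.congr' ?_
    filter_upwards [eventually_gt_atTop 0] with n hn
    have : (n:ℝ) ≠ 0 := Nat.cast_ne_zero.mpr hn.ne'
    field_simp
  refine tendsto_of_tendsto_of_tendsto_of_le_of_le' hlo hhi ?_ ?_
  · -- lower eventual bound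
    filter_upwards [eventually_ge_atTop 24] with n hn
    have hn2 : 2 ≤ n := by omega
    have hb := (main_bounds hn2).1
    have hE := E_le_factorial hn
    have hnat : (n-2) * (n-2).factorial ≤ n * (∑ d ∈ n.divisors, numCycles n d) := by
      have h1 : n - 1 = (n-2) + 1 := by omega
      rw [h1, add_mul, one_mul] at hb
      have h2 : (n-2) * (n-2).factorial + (n-2).factorial
          ≤ n * (∑ d ∈ n.divisors, numCycles n d) + (n-2).factorial := by
        calc (n-2) * (n-2).factorial + (n-2).factorial
            ≤ n * (∑ d ∈ n.divisors, numCycles n d) + n * n ^ (n/2 + 2) := hb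
          _ ≤ n * (∑ d ∈ n.divisors, numCycles n d) + (n-2).factorial :=
              Nat.add_le_add_left hE _
      exact Nat.le_of_add_le_add_right h2
    have hF : (0:ℝ) < ((n-2).factorial : ℝ) := by positivity
    have hN : (0:ℝ) < (n:ℝ) := by positivity
    rw [div_le_div_iff₀ hN hF]
    have hcast : ((n:ℝ) - 2) * ((n-2).factorial : ℝ)
        ≤ (n:ℝ) * ((∑ d ∈ n.divisors, numCycles n d : ℕ) : ℝ) := by
      have := hnat
      have h3 : (((n-2) * (n-2).factorial : ℕ) : ℝ)
          ≤ ((n * (∑ d ∈ n.divisors, numCycles n d) : ℕ) : ℝ) := Nat.cast_le.mpr this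
      push_cast [Nat.cast_sub hn2] at h3
      convert h3 using 2 <;> push_cast <;> ring
    calc ((n:ℝ) - 2) * ((n-2).factorial : ℝ)
        ≤ (n:ℝ) * ((∑ d ∈ n.divisors, numCycles n d : ℕ) : ℝ) := hcast
      _ = ((∑ d ∈ n.divisors, numCycles n d : ℕ) : ℝ) * (n:ℝ) := by ring
  · -- upper eventual bound
    filter_upwards [eventually_ge_atTop 24] with n hn
    have hn2 : 2 ≤ n := by omega
    have hb := (main_bounds hn2).2
    have hE := E_le_factorial hn
    have hnat : n * (∑ d ∈ n.divisors, numCycles n d) ≤ (n+2) * (n-2).factorial := by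
      calc n * (∑ d ∈ n.divisors, numCycles n d)
          ≤ (n+1) * (n-2).factorial + n * n ^ (n/2 + 2) := hb
        _ ≤ (n+1) * (n-2).factorial + (n-2).factorial := Nat.add_le_add_left hE _
        _ = (n+2) * (n-2).factorial := by ring
    have hF : (0:ℝ) < ((n-2).factorial : ℝ) := by positivity
    have hN : (0:ℝ) < (n:ℝ) := by positivity
    rw [div_le_div_iff₀ hF hN]
    have h3 : ((n * (∑ d ∈ n.divisors, numCycles n d) : ℕ) : ℝ)
        ≤ (((n+2) * (n-2).factorial : ℕ) : ℝ) := Nat.cast_le.mpr hnat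
    push_cast at h3 ⊢
    linarith [h3]
end

section
/- For every prime p, B(p) = 1 + (p−1)² + 2(p−1)·((p−1)! − (p−1))/p (this quantity being an integer by Wilson's theorem), and moreover B(p)/(p−1)! tends to 2 as p tends to infinity through the primes. -/
set_option linter.unusedSectionVars false


open Equiv Filter Topology

/-- `B(n) = 1 + Σ_{d ∣ n} c(d)·(d + n − 2)`, the sum over positive divisors `d` of `n`. -/
noncomputable def Bbound (n : ℕ) : ℕ :=
  1 + ∑ d ∈ n.divisors, numCycles n d * (d + n - 2)

namespace Stmt11

lemma cyc_pow (n : ℕ) (k : ℕ) : cyc n ^ k = Equiv.addRight (k : ZMod n) := by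
  induction k with
  | zero => ext x; simp
  | succ k ih => rw [pow_succ, ih]; ext x; simp [cyc, add_assoc]; ring

lemma cyc_zpow (n : ℕ) (i : ℤ) : cyc n ^ i = Equiv.addRight (i : ZMod n) := by
  cases i with
  | ofNat k => rw [Int.ofNat_eq_natCast, zpow_natCast, cyc_pow]; simp
  | negSucc k =>
    rw [zpow_negSucc, cyc_pow]; ext x
    simp [Perm.inv_def, Int.negSucc_eq]

lemma cyc_zpow_apply (n : ℕ) (i : ℤ) (x : ZMod n) : (cyc n ^ i) x = x + i := by
  rw [cyc_zpow]; rfl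

lemma cyc_zpow_eq_iff (n : ℕ) (i j : ℤ) : cyc n ^ i = cyc n ^ j ↔ (i : ZMod n) = j := by
  rw [cyc_zpow, cyc_zpow]
  constructor
  · intro h
    have := Equiv.congr_fun h 0
    simpa using this
  · intro h; rw [h]

variable {p : ℕ} [hp : Fact p.Prime]

abbrev mk (π : Perm (ZMod p)) : IncClasses p := Quotient.mk (incSetoid p) π

lemma mk_eq_mk {π π' : Perm (ZMod p)} : mk π = mk π' ↔ ∃ i : ℤ, π' = cyc p ^ i * π :=
  ⟨Quotient.exact, fun h => Quotient.sound h⟩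

lemma incShift_mk (π : Perm (ZMod p)) : incShift p (mk π) = mk (π * cyc p) := rfl

lemma incShift_iterate (k : ℕ) (π : Perm (ZMod p)) :
    (incShift p)^[k] (mk π) = mk (π * cyc p ^ k) := by
  induction k with
  | zero => simp
  | succ k ih =>
    rw [Function.iterate_succ_apply', ih, incShift_mk, pow_succ, mul_assoc]

lemma cyc_pow_card : cyc p ^ p = 1 := by
  rw [cyc_pow]
  simp

lemma incShift_iterate_card (q : IncClasses p) : (incShift p)^[p] q = q := by
  induction q using Quotient.ind with
  | _ π => rw [incShift_iterate, cyc_pow_card, mul_one]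

instance : Finite (IncClasses p) := Quotient.finite _

lemma card_bij : Function.Bijective
    (fun π : Perm (ZMod p) => ((π 0, mk π) : ZMod p × IncClasses p)) := by
  constructor
  · intro π π' h
    simp only [Prod.mk.injEq] at h
    obtain ⟨h0, hq⟩ := h
    obtain ⟨i, rfl⟩ := mk_eq_mk.1 hq
    have h2 : π 0 + (i : ZMod p) = π 0 := by
      rw [← cyc_zpow_apply p i (π 0), ← Perm.mul_apply]; exact h0.symm
    have hi : (i : ZMod p) = ((0 : ℤ) : ZMod p) := by
      push_cast; simpa using h2
    rw [(cyc_zpow_eq_iff p i 0).2 hi, zpow_zero, one_mul]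
  · rintro ⟨b, q⟩
    induction q using Quotient.ind with
    | _ π =>
      refine ⟨cyc p ^ (((b - π 0).val : ℕ) : ℤ) * π, ?_⟩
      have hcast : ((((b - π 0).val : ℕ) : ℤ) : ZMod p) = b - π 0 := by
        push_cast
        simp [ZMod.natCast_val, ZMod.cast_id]
      simp only [Prod.mk.injEq]
      refine Prod.ext ?_ ?_ <;> dsimp only
      · rw [Perm.mul_apply, cyc_zpow_apply, hcast]; ring
      · exact (mk_eq_mk.2 ⟨_, rfl⟩).symm

lemma card_classes : Nat.card (IncClasses p) = (p - 1).factorial := by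
  have h := Nat.card_eq_of_bijective _ (card_bij (p := p))
  rw [Nat.card_eq_fintype_card (α := Perm (ZMod p)), Fintype.card_perm, ZMod.card] at h
  rw [Nat.card_prod, Nat.card_eq_fintype_card (α := ZMod p), ZMod.card] at h
  rw [← Nat.mul_factorial_pred hp.out.ne_zero] at h
  exact Nat.eq_of_mul_eq_mul_left hp.out.pos h.symm

noncomputable def aff (u : (ZMod p)ˣ) : Perm (ZMod p) :=
  Equiv.mulLeft₀ (u : ZMod p) u.ne_zero

lemma aff_apply (u : (ZMod p)ˣ) (x : ZMod p) : aff u x = u * x := rfl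

lemma cyc_apply (x : ZMod p) : (cyc p) x = x + 1 := rfl

def Fix (p : ℕ) [Fact p.Prime] : Set (IncClasses p) := {q | incShift p q = q}

lemma val_cast (x : ZMod p) : ((x.val : ℤ) : ZMod p) = x := by
  push_cast
  simp [ZMod.natCast_val, ZMod.cast_id]

lemma mem_fix_aff (u : (ZMod p)ˣ) : mk (aff u) ∈ Fix p := by
  show incShift p (mk (aff u)) = mk (aff u)
  rw [incShift_mk]
  refine (mk_eq_mk.2 ⟨(((u : ZMod p).val : ℕ) : ℤ), ?_⟩).symm
  ext x
  simp only [Perm.mul_apply, cyc_zpow_apply, aff_apply, cyc_apply]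
  rw [val_cast]
  ring

lemma fix_eq_range : Fix p = Set.range (fun u : (ZMod p)ˣ => mk (aff u)) := by
  ext q
  constructor
  · intro hq
    induction q using Quotient.ind with
    | _ π =>
      have hq' : incShift p (mk π) = mk π := hq
      rw [incShift_mk] at hq'
      obtain ⟨i, hi⟩ := mk_eq_mk.1 hq'.symm
      -- hi : π * cyc p = cyc p ^ i * π
      set c : ZMod p := ((i : ℤ) : ZMod p) with hc
      have hstep : ∀ x, π (x + 1) = π x + c := by
        intro x
        have h := Equiv.congr_fun hi x
        simp only [Perm.mul_apply, cyc_zpow_apply, cyc_apply] at h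
        exact h
      have hlin : ∀ m : ℕ, π ((m : ZMod p)) = π 0 + c * m := by
        intro m
        induction m with
        | zero => simp
        | succ m ih => push_cast; rw [hstep, ih]; ring
      have hall : ∀ x : ZMod p, π x = π 0 + c * x := by
        intro x
        have hx : ((x.val : ℕ) : ZMod p) = x := by
          simp [ZMod.natCast_val, ZMod.cast_id]
        rw [← hx, hlin, hx]
      have hcne : c ≠ 0 := by
        intro h0
        have h1 := hall 1
        rw [h0] at h1
        simp only [zero_mul, add_zero] at h1
        exact one_ne_zero (π.injective h1)
      refine ⟨Units.mk0 c hcne, ?_⟩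
      refine (mk_eq_mk.2 ⟨(((π 0).val : ℕ) : ℤ), ?_⟩)
      ext x
      simp only [Perm.mul_apply, cyc_zpow_apply, aff_apply]
      rw [val_cast, hall x]
      show π 0 + c * x = c * x + π 0
      ring
  · rintro ⟨u, rfl⟩
    exact mem_fix_aff u

lemma aff_inj : Function.Injective (fun u : (ZMod p)ˣ => mk (aff u)) := by
  intro u v h
  obtain ⟨i, hi⟩ := mk_eq_mk.1 h
  have h0 := Equiv.congr_fun hi 0
  simp only [Perm.mul_apply, cyc_zpow_apply, aff_apply, mul_zero, zero_add] at h0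
  have hi0 : (i : ZMod p) = ((0 : ℤ) : ZMod p) := by push_cast; exact h0.symm
  rw [(cyc_zpow_eq_iff p i 0).2 hi0, zpow_zero, one_mul] at hi
  have h1 := Equiv.congr_fun hi 1
  simp only [aff_apply, mul_one] at h1
  exact Units.ext h1.symm

lemma ncard_fix : (Fix p).ncard = p - 1 := by
  have h1 : (Fix p).ncard = Nat.card (ZMod p)ˣ := by
    rw [fix_eq_range, ← Nat.card_coe_set_eq]
    exact Nat.card_congr (Equiv.ofInjective _ aff_inj).symm
  rw [h1, Nat.card_eq_fintype_card, ZMod.card_units_eq_totient, Nat.totient_prime hp.out]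

lemma oneCycle_iterate (k : ℕ) (q : IncClasses p) :
    oneCycle p ((incShift p)^[k] q) = oneCycle p q := by
  apply Set.Subset.antisymm
  · rintro x ⟨i, rfl⟩
    exact ⟨i + k, Function.iterate_add_apply _ i k q⟩
  · rintro x ⟨i, rfl⟩
    have hmk : (p - 1) * k + k = p * k := by
      conv_rhs => rw [← Nat.succ_pred_eq_of_pos hp.out.pos]
      rw [Nat.succ_mul]
      rfl
    have hq : (incShift p)^[(p - 1) * k + k] q = q := by
      rw [hmk, Function.iterate_mul]
      exact Function.iterate_fixed (incShift_iterate_card q) k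
    refine ⟨i + (p - 1) * k, ?_⟩
    show (incShift p)^[i + (p-1)*k] ((incShift p)^[k] q) = (incShift p)^[i] q
    rw [Function.iterate_add_apply, ← Function.iterate_add_apply _ ((p-1)*k) k q, hq]

lemma oneCycle_eq_of_mem {x q : IncClasses p} (h : x ∈ oneCycle p q) :
    oneCycle p x = oneCycle p q := by
  obtain ⟨k, rfl⟩ := h
  exact oneCycle_iterate k q

lemma oneCycle_fixed {q : IncClasses p} (h : incShift p q = q) :
    oneCycle p q = {q} := by
  ext x
  constructor
  · rintro ⟨i, rfl⟩
    exact (Function.iterate_fixed h i)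
  · rintro rfl
    exact ⟨0, rfl⟩

lemma minimalPeriod_eq {q : IncClasses p} (h : incShift p q ≠ q) :
    Function.minimalPeriod (incShift p) q = p := by
  have hper : Function.IsPeriodicPt (incShift p) p q := incShift_iterate_card q
  rcases hp.out.eq_one_or_self_of_dvd _ hper.minimalPeriod_dvd with h1 | hh
  · exact absurd (Function.minimalPeriod_eq_one_iff_isFixedPt.1 h1) h
  · exact hh

lemma ncard_oneCycle_of_ne {q : IncClasses p} (h : incShift p q ≠ q) :
    (oneCycle p q).ncard = p := by
  have hmp := minimalPeriod_eq h
  have hrange : oneCycle p q = Set.range (fun i : Fin p => (incShift p)^[i.1] q) := by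
    ext x
    constructor
    · rintro ⟨i, rfl⟩
      refine ⟨⟨i % p, Nat.mod_lt _ hp.out.pos⟩, ?_⟩
      show (incShift p)^[i % p] q = (incShift p)^[i] q
      have h2 := Function.iterate_mod_minimalPeriod_eq (f := incShift p) (x := q) (n := i)
      rw [hmp] at h2
      exact h2
    · rintro ⟨i, rfl⟩
      exact ⟨i.1, rfl⟩
  have hinj : Function.Injective (fun i : Fin p => (incShift p)^[i.1] q) := by
    intro i j hij
    refine Fin.ext (Function.iterate_injOn_Iio_minimalPeriod ?_ ?_ hij)
    · rw [hmp]; exact i.2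
    · rw [hmp]; exact j.2
  rw [hrange, ← Nat.card_coe_set_eq]
  rw [Nat.card_congr (Equiv.ofInjective _ hinj).symm, Nat.card_eq_fintype_card, Fintype.card_fin]

noncomputable instance : Fintype (IncClasses p) := Fintype.ofFinite _

lemma numCycles_one : numCycles p 1 = p - 1 := by
  have himg : {S : Set (IncClasses p) | (∃ q, S = oneCycle p q) ∧ S.ncard = 1}
      = (fun q => ({q} : Set (IncClasses p))) '' (Fix p) := by
    ext S
    simp only [Set.mem_setOf_eq, Set.mem_image]
    constructor
    · rintro ⟨⟨q, rfl⟩, h1⟩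
      obtain ⟨a, ha⟩ := Set.ncard_eq_one.1 h1
      have hq : q ∈ oneCycle p q := ⟨0, rfl⟩
      rw [ha, Set.mem_singleton_iff] at hq
      subst hq
      have hfq : incShift p q ∈ oneCycle p q := ⟨1, rfl⟩
      rw [ha, Set.mem_singleton_iff] at hfq
      exact ⟨q, hfq, ha.symm⟩
    · rintro ⟨q, hq, rfl⟩
      exact ⟨⟨q, (oneCycle_fixed hq).symm⟩, Set.ncard_singleton q⟩
  rw [numCycles, himg, Set.ncard_image_of_injective _ Set.singleton_injective, ncard_fix]

lemma numCycles_p_mul : numCycles p p * p = (p - 1).factorial - (p - 1) := by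
  classical
  set f := incShift p with hf
  set NF : Finset (IncClasses p) := Finset.univ.filter (fun q => ¬ (f q = q)) with hNF
  set T : Finset (Set (IncClasses p)) := NF.image (oneCycle p) with hT
  have hnonfix_ncard : ∀ q ∈ NF, (oneCycle p q).ncard = p := by
    intro q hq
    exact ncard_oneCycle_of_ne (Finset.mem_filter.1 hq).2
  have hcard := Finset.card_eq_sum_card_fiberwise
    (fun q hq => Finset.mem_image_of_mem (oneCycle p) hq : ∀ q ∈ NF, oneCycle p q ∈ T)
  have hfiber : ∀ S ∈ T, (NF.filter fun q => oneCycle p q = S).card = p := by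
    intro S hS
    obtain ⟨q0, hq0, rfl⟩ := Finset.mem_image.1 hS
    have hq0' : ¬ (f q0 = q0) := (Finset.mem_filter.1 hq0).2
    have hset : (NF.filter fun q => oneCycle p q = oneCycle p q0)
        = (oneCycle p q0).toFinset := by
      ext q
      simp only [Finset.mem_filter, Set.mem_toFinset, Finset.mem_univ, true_and, hNF]
      constructor
      · rintro ⟨hne, hq⟩
        rw [← hq]; exact ⟨0, rfl⟩
      · intro hq
        have heq := oneCycle_eq_of_mem hq
        refine ⟨?_, heq⟩
        intro hfix
        have h1 : oneCycle p q = {q} := oneCycle_fixed hfix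
        have h2 : (oneCycle p q0).ncard = p := ncard_oneCycle_of_ne hq0'
        rw [← heq, h1, Set.ncard_singleton] at h2
        exact hp.out.one_lt.ne h2
    rw [hset, ← Set.ncard_eq_toFinset_card', hnonfix_ncard q0 hq0]
  have hsum : NF.card = T.card * p := by
    rw [hcard, Finset.sum_congr rfl hfiber, Finset.sum_const, smul_eq_mul]
  have hNFcard : NF.card = (p - 1).factorial - (p - 1) := by
    have hfixf : (Finset.univ.filter (fun q => f q = q)).card = p - 1 := by
      have : (Finset.univ.filter (fun q => f q = q) : Finset (IncClasses p))
          = (Fix p).toFinset := by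
        ext q
        rw [Set.mem_toFinset]; simp [Fix, hf]
      rw [this, ← Set.ncard_eq_toFinset_card', ncard_fix]
    have huniv : (Finset.univ : Finset (IncClasses p)).card = (p - 1).factorial := by
      rw [Finset.card_univ, ← Nat.card_eq_fintype_card, card_classes]
    have hNFeq : NF = Finset.univ \ (Finset.univ.filter (fun q => f q = q)) := by
      rw [hNF, Finset.filter_not]
    rw [hNFeq, Finset.card_sdiff_of_subset (Finset.filter_subset _ _), hfixf, huniv]
  have hTval : numCycles p p = T.card := by
    have : {S : Set (IncClasses p) | (∃ q, S = oneCycle p q) ∧ S.ncard = p} = ↑T := by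
      ext S
      simp only [Set.mem_setOf_eq, hT, Finset.coe_image, Set.mem_image, Finset.mem_coe]
      constructor
      · rintro ⟨⟨q, rfl⟩, hn⟩
        refine ⟨q, ?_, rfl⟩
        rw [hNF, Finset.mem_filter]
        refine ⟨Finset.mem_univ q, fun hfix => ?_⟩
        rw [oneCycle_fixed hfix, Set.ncard_singleton] at hn
        exact hp.out.one_lt.ne hn
      · rintro ⟨q, hq, rfl⟩
        exact ⟨⟨q, rfl⟩, hnonfix_ncard q hq⟩
    rw [numCycles, this, Set.ncard_coe_finset]
  rw [hTval, ← hsum, hNFcard]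

lemma dvd_fact : p ∣ (p - 1).factorial - (p - 1) :=
  ⟨numCycles p p, by rw [← numCycles_p_mul, mul_comm]⟩

lemma div_eq : ((p - 1).factorial - (p - 1)) / p = numCycles p p := by
  rw [← numCycles_p_mul, Nat.mul_div_cancel _ hp.out.pos]

lemma bbound_eq :
    Bbound p = 1 + (p - 1) ^ 2 + 2 * (p - 1) * (((p - 1).factorial - (p - 1)) / p) := by
  have h2 : 2 ≤ p := hp.out.two_le
  rw [Bbound, Nat.Prime.divisors hp.out, Finset.sum_pair hp.out.one_lt.ne, numCycles_one,
    div_eq]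
  have e1 : 1 + p - 2 = p - 1 := by omega
  have e2 : p + p - 2 = 2 * (p - 1) := by omega
  rw [e1, e2, sq]
  ring

lemma bq_eq : (Bbound p : ℝ) / (((p - 1).factorial : ℕ) : ℝ)
    = (1 + ((p - 1 : ℕ) : ℝ) ^ 2) / (((p - 1).factorial : ℕ) : ℝ)
      + 2 * ((p - 1 : ℕ) : ℝ) / (p : ℝ)
        * (1 - ((p - 1 : ℕ) : ℝ) / (((p - 1).factorial : ℕ) : ℝ)) := by
  have hle : (p - 1) ≤ (p - 1).factorial := Nat.self_le_factorial _
  have hm : ((p : ℝ)) * (numCycles p p : ℝ)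
      = (((p - 1).factorial : ℕ) : ℝ) - ((p - 1 : ℕ) : ℝ) := by
    have h := numCycles_p_mul (p := p)
    have h2 := congrArg (Nat.cast : ℕ → ℝ) h
    push_cast [Nat.cast_sub hle] at h2
    linarith [h2]
  have hB : (Bbound p : ℝ)
      = 1 + ((p - 1 : ℕ) : ℝ) ^ 2 + 2 * ((p - 1 : ℕ) : ℝ) * (numCycles p p : ℝ) := by
    have h := bbound_eq (p := p)
    rw [div_eq] at h
    exact_mod_cast congrArg (Nat.cast : ℕ → ℝ) h
  have hfne : (((p - 1).factorial : ℕ) : ℝ) ≠ 0 := Nat.cast_ne_zero.2 (Nat.factorial_ne_zero _)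
  have hpne : (p : ℝ) ≠ 0 := Nat.cast_ne_zero.2 hp.out.ne_zero
  have hk : (numCycles p p : ℝ)
      = ((((p - 1).factorial : ℕ) : ℝ) - ((p - 1 : ℕ) : ℝ)) / (p : ℝ) := by
    rw [eq_div_iff hpne]
    linarith [hm]
  rw [hB, hk]
  field_simp

end Stmt11

namespace Stmt11

lemma sq_le_two_pow : ∀ n : ℕ, 4 ≤ n → n ^ 2 ≤ 2 ^ n := by
  intro n hn
  induction n with
  | zero => omega
  | succ m ih =>
    rcases Nat.lt_or_ge m 4 with h4 | h4
    · have hm3 : m = 3 := by omega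
      subst hm3; norm_num
    · have hm := ih (by omega)
      have h1 : 2 * m + 1 ≤ m ^ 2 := by nlinarith
      calc (m + 1) ^ 2 = m ^ 2 + (2 * m + 1) := by ring
        _ ≤ 2 ^ m + 2 ^ m := add_le_add hm (h1.trans hm)
        _ = 2 ^ (m + 1) := by ring

lemma fact_tendsto : Tendsto (fun n : ℕ => (n.factorial : ℝ)) atTop atTop :=
  tendsto_natCast_atTop_atTop.comp (tendsto_atTop_mono Nat.self_le_factorial tendsto_id)

lemma one_div_fact : Tendsto (fun n : ℕ => 1 / (n.factorial : ℝ)) atTop (𝓝 0) := by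
  simpa [one_div, Pi.inv_def] using fact_tendsto.inv_tendsto_atTop

lemma sq_div_fact : Tendsto (fun n : ℕ => ((n : ℝ) ^ 2) / (n.factorial : ℝ)) atTop (𝓝 0) := by
  apply squeeze_zero' (Filter.Eventually.of_forall fun n => by positivity)
    ?_ (FloorSemiring.tendsto_pow_div_factorial_atTop (2 : ℝ))
  filter_upwards [eventually_ge_atTop 4] with n hn
  have hcast : ((n : ℝ) ^ 2) ≤ (2 : ℝ) ^ n := by exact_mod_cast sq_le_two_pow n hn
  exact div_le_div_of_nonneg_right hcast (by positivity)

lemma self_div_fact : Tendsto (fun n : ℕ => (n : ℝ) / (n.factorial : ℝ)) atTop (𝓝 0) := by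
  apply squeeze_zero' (Filter.Eventually.of_forall fun n => by positivity) ?_ sq_div_fact
  filter_upwards [eventually_ge_atTop 1] with n hn
  have hn1 : (1 : ℝ) ≤ (n : ℝ) := by exact_mod_cast hn
  have h1 : (n : ℝ) ≤ (n : ℝ) ^ 2 := by nlinarith
  exact div_le_div_of_nonneg_right h1 (by positivity)

lemma g_tendsto : Tendsto (fun n : ℕ =>
    (1 + ((n - 1 : ℕ) : ℝ) ^ 2) / (((n - 1).factorial : ℕ) : ℝ)
    + 2 * ((n - 1 : ℕ) : ℝ) / (n : ℝ)
      * (1 - ((n - 1 : ℕ) : ℝ) / (((n - 1).factorial : ℕ) : ℝ))) atTop (𝓝 2) := by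
  have hsub : Tendsto (fun n : ℕ => n - 1) atTop atTop := tendsto_sub_atTop_nat 1
  have h1 : Tendsto (fun n : ℕ =>
      (1 + ((n - 1 : ℕ) : ℝ) ^ 2) / (((n - 1).factorial : ℕ) : ℝ)) atTop (𝓝 0) := by
    have h := (one_div_fact.add sq_div_fact).comp hsub
    simp only [Function.comp_def] at h
    have h' : Tendsto (fun n : ℕ =>
        1 / (((n - 1).factorial : ℕ) : ℝ) + ((n - 1 : ℕ) : ℝ) ^ 2 / (((n - 1).factorial : ℕ) : ℝ))
        atTop (𝓝 0) := by simpa using h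
    apply h'.congr
    intro n
    rw [← add_div]
  have h3 : Tendsto (fun n : ℕ =>
      1 - ((n - 1 : ℕ) : ℝ) / (((n - 1).factorial : ℕ) : ℝ)) atTop (𝓝 1) := by
    have h := self_div_fact.comp hsub
    simp only [Function.comp_def] at h
    simpa using tendsto_const_nhds.sub h
  have h2 : Tendsto (fun n : ℕ => 2 * ((n - 1 : ℕ) : ℝ) / (n : ℝ)) atTop (𝓝 2) := by
    have hbase : Tendsto (fun n : ℕ => 2 * (1 - 1 / (n : ℝ))) atTop (𝓝 (2 * (1 - 0))) :=
      Tendsto.mul tendsto_const_nhds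
        (Tendsto.sub tendsto_const_nhds tendsto_one_div_atTop_nhds_zero_nat)
    norm_num at hbase
    apply Tendsto.congr' ?_ hbase
    filter_upwards [eventually_ge_atTop 1] with n hn
    have hne : (n : ℝ) ≠ 0 := by
      have : (1 : ℝ) ≤ (n : ℝ) := by exact_mod_cast hn
      linarith
    have hcast : ((n - 1 : ℕ) : ℝ) = (n : ℝ) - 1 := by
      push_cast [Nat.cast_sub hn]
      ring
    rw [hcast]
    field_simp
  have := h1.add (h2.mul h3)
  simpa using this

end Stmt11

/-- For every prime `p`, `B(p) = 1 + (p−1)² + 2(p−1)·((p−1)! − (p−1))/p` (the division being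
exact by Wilson's theorem), and `B(p)/(p−1)! → 2` as `p → ∞` through the primes. -/
theorem stmt11 :
    (∀ p : ℕ, p.Prime →
      p ∣ ((p - 1).factorial - (p - 1)) ∧
      Bbound p = 1 + (p - 1) ^ 2 + 2 * (p - 1) * (((p - 1).factorial - (p - 1)) / p)) ∧
    Tendsto (fun p : ℕ => (Bbound p : ℝ) / ((p - 1).factorial : ℝ))
      (atTop ⊓ 𝓟 {p : ℕ | p.Prime}) (𝓝 2) := by
  constructor
  · intro p hpp
    haveI : Fact p.Prime := ⟨hpp⟩
    exact ⟨Stmt11.dvd_fact, Stmt11.bbound_eq⟩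
  · apply Tendsto.congr' ?_ (Stmt11.g_tendsto.mono_left inf_le_left)
    refine Filter.eventuallyEq_of_mem (mem_inf_of_right (Filter.mem_principal_self _)) ?_
    intro p hpp
    haveI : Fact p.Prime := ⟨hpp⟩
    exact Stmt11.bq_eq.symm
end
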